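/- arXiv:2307.04698 — 2 statements merged into one kernel-verified Lean document; each statement's English description precedes it below -/
import Mathlib

section
/- Let Γ be a countable discrete abelian group and (u_g)_{g∈Γ} a bounded sequence in a Hilbert space H. Suppose that for every h ∈ Γ the uniform Cesàro limit ξ_h := UC-lim_{g∈Γ} ⟨u_{g+h}, u_g⟩ exists, and that UC-lim_{h∈Γ} ξ_h = 0. Then UC-lim_{g∈Γ} u_g = 0 in H. -/
open Filter Finset MeasureTheory

section UC
variable {Γ : Type*} [AddCommGroup Γ] [DecidableEq Γ]

/-- A Følner sequence in a countable discrete abelian group: a sequence of nonempty finite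
subsets which is asymptotically invariant under every translation. -/
def IsFolner (Φ : ℕ → Finset Γ) : Prop :=
  (∀ N, (Φ N).Nonempty) ∧
  ∀ x : Γ, Tendsto
    (fun N => ((symmDiff ((Φ N).image (· + x)) (Φ N)).card : ℝ) / (Φ N).card) atTop (nhds 0)

/-- `UCLim v L`: the uniform Cesàro limit of `v` equals `L`, i.e. the averages of `v` along
every Følner sequence converge to `L`. -/
def UCLim {E : Type*} [AddCommGroup E] [Module ℝ E] [TopologicalSpace E]
    (v : Γ → E) (L : E) : Prop :=
  ∀ Φ : ℕ → Finset Γ, IsFolner Φ →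
    Tendsto (fun N => (((Φ N).card : ℝ)⁻¹) • ∑ g ∈ Φ N, v g) atTop (nhds L)

end UC

section VDCHelpers

variable {Γ : Type*} [AddCommGroup Γ] [DecidableEq Γ]

private lemma vdc_folner_translate {Φ : ℕ → Finset Γ} (hΦ : IsFolner Φ) (t : ℕ → Γ) :
    IsFolner (fun N => (Φ N).image (· + t N)) := by
  refine ⟨fun N => ((hΦ.1 N).image _), fun x => ?_⟩
  have key : ∀ N, ((symmDiff (((Φ N).image (· + t N)).image (· + x))
      ((Φ N).image (· + t N))).card : ℝ) / (((Φ N).image (· + t N)).card)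
      = ((symmDiff ((Φ N).image (· + x)) (Φ N)).card : ℝ) / (Φ N).card := by
    intro N
    have h1 : ((Φ N).image (· + t N)).image (· + x)
        = ((Φ N).image (· + x)).image (· + t N) := by
      rw [Finset.image_image, Finset.image_image]
      congr 1
      funext a
      simp [Function.comp, add_right_comm]
    rw [h1, ← Finset.image_symmDiff _ _ (add_left_injective (t N)),
      Finset.card_image_of_injective _ (add_left_injective (t N)),
      Finset.card_image_of_injective _ (add_left_injective (t N))]
  simpa only [key] using hΦ.2 x

private lemma vdc_sum_image_add {E : Type*} [AddCommMonoid E] (s : Finset Γ) (t : Γ)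
    (v : Γ → E) : ∑ g ∈ s.image (· + t), v g = ∑ g ∈ s, v (g + t) :=
  Finset.sum_image (fun _ _ _ _ h => add_left_injective t h)

private lemma vdc_sum_sub_sum_norm {E : Type*} [NormedAddCommGroup E] (A B : Finset Γ)
    (v : Γ → E) (C : ℝ) (hC : ∀ g, ‖v g‖ ≤ C) :
    ‖(∑ g ∈ A, v g) - ∑ g ∈ B, v g‖ ≤ C * (symmDiff A B).card := by
  have h1 : (∑ g ∈ A, v g) - ∑ g ∈ B, v g = (∑ g ∈ A \ B, v g) - ∑ g ∈ B \ A, v g := by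
    rw [← Finset.sum_sdiff_sub_sum_sdiff]
  have h2 : ∀ s : Finset Γ, ‖∑ g ∈ s, v g‖ ≤ C * s.card := by
    intro s
    calc ‖∑ g ∈ s, v g‖ ≤ ∑ g ∈ s, ‖v g‖ := norm_sum_le _ _
      _ ≤ s.card • C := Finset.sum_le_card_nsmul _ _ _ (fun g _ => hC g)
      _ = C * s.card := by rw [nsmul_eq_mul]; ring
  have h3 : ((symmDiff A B).card : ℝ) = (A \ B).card + (B \ A).card := by
    rw [symmDiff_def, Finset.sup_eq_union, Finset.card_union_of_disjoint disjoint_sdiff_sdiff]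
    push_cast; ring
  calc ‖(∑ g ∈ A, v g) - ∑ g ∈ B, v g‖
      ≤ ‖∑ g ∈ A \ B, v g‖ + ‖∑ g ∈ B \ A, v g‖ := by rw [h1]; exact norm_sub_le _ _
    _ ≤ C * (A \ B).card + C * (B \ A).card := add_le_add (h2 _) (h2 _)
    _ = C * (symmDiff A B).card := by rw [h3]; ring

private lemma vdc_avg_norm_sq {E : Type*} [NormedAddCommGroup E] [NormedSpace ℝ E]
    (s : Finset Γ) (w : Γ → E) :
    ‖((s.card : ℝ)⁻¹) • ∑ g ∈ s, w g‖ ^ 2 ≤ (s.card : ℝ)⁻¹ * ∑ g ∈ s, ‖w g‖ ^ 2 := by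
  rcases s.eq_empty_or_nonempty with rfl | hs
  · simp
  have hc : (0 : ℝ) < s.card := by exact_mod_cast Finset.card_pos.2 hs
  calc ‖((s.card : ℝ)⁻¹) • ∑ g ∈ s, w g‖ ^ 2
      = ((s.card : ℝ)⁻¹) ^ 2 * ‖∑ g ∈ s, w g‖ ^ 2 := by
        rw [norm_smul, Real.norm_eq_abs, abs_of_nonneg (by positivity), mul_pow]
    _ ≤ ((s.card : ℝ)⁻¹) ^ 2 * (∑ g ∈ s, ‖w g‖) ^ 2 := by
        gcongr
        exact norm_sum_le _ _
    _ ≤ ((s.card : ℝ)⁻¹) ^ 2 * (s.card * ∑ g ∈ s, ‖w g‖ ^ 2) := by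
        gcongr
        exact sq_sum_le_card_mul_sum_sq
    _ = (s.card : ℝ)⁻¹ * ∑ g ∈ s, ‖w g‖ ^ 2 := by
        field_simp

end VDCHelpers

/-- **van der Corput differencing lemma.** If `(u_g)` is a bounded sequence in a Hilbert
space, the uniform Cesàro limits `ξ_h = UC-lim_g ⟨u_{g+h}, u_g⟩` all exist, and
`UC-lim_h ξ_h = 0`, then `UC-lim_g u_g = 0`. -/
theorem vdc_lemma {Γ : Type*} [AddCommGroup Γ] [Countable Γ] [DecidableEq Γ]
    {H : Type*} [NormedAddCommGroup H] [InnerProductSpace ℂ H]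
    (u : Γ → H) (hbdd : ∃ C, ∀ g, ‖u g‖ ≤ C)
    (ξ : Γ → ℂ)
    (hξ : ∀ h : Γ, UCLim (fun g => (inner ℂ (u (g + h)) (u g) : ℂ)) (ξ h))
    (hξ0 : UCLim ξ 0) :
    UCLim u 0 := by
  obtain ⟨C, hC⟩ := hbdd
  have hC0 : 0 ≤ C := le_trans (norm_nonneg (u 0)) (hC 0)
  intro Φ hΦ
  rw [NormedAddCommGroup.tendsto_nhds_zero]
  intro ε hε
  set a : ℕ → ℝ := fun N => ((Φ N).card : ℝ)⁻¹ with ha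
  -- averaged inner products converge along Φ
  have hinner : ∀ h h' : Γ,
      Tendsto (fun N => a N • ∑ g ∈ Φ N, (inner ℂ (u (g + h)) (u (g + h')) : ℂ))
        atTop (nhds (ξ (h - h'))) := by
    intro h h'
    have h1 := hξ (h - h') (fun N => (Φ N).image (· + h'))
      (vdc_folner_translate hΦ (fun _ => h'))
    have h2 : ∀ g : Γ, g + h' + (h - h') = g + h := fun g => by abel
    simp only [vdc_sum_image_add, Finset.card_image_of_injective _ (add_left_injective h'),
      h2] at h1
    exact h1
  -- find a good averaging set F
  have hF : ∃ F : Finset Γ, F.Nonempty ∧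
      ‖(((F.card : ℝ)⁻¹) ^ 2) • ∑ h ∈ F, ∑ h' ∈ F, ξ (h - h')‖ < ε ^ 2 / 8 := by
    by_contra hcon
    push_neg at hcon
    have hsel : ∀ M : ℕ, ∃ h' ∈ Φ M,
        ε ^ 2 / 8 ≤ ‖(((Φ M).card : ℝ)⁻¹) • ∑ h ∈ Φ M, ξ (h - h')‖ := by
      intro M
      by_contra hall
      push_neg at hall
      have hne := hΦ.1 M
      have hcard : (0 : ℝ) < (Φ M).card := by exact_mod_cast Finset.card_pos.2 hne
      have hQ := hcon (Φ M) hne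
      have hbound : ‖(((Φ M).card : ℝ)⁻¹) ^ 2 • ∑ h ∈ Φ M, ∑ h' ∈ Φ M, ξ (h - h')‖
          < ε ^ 2 / 8 := by
        have hterm : ∀ h' ∈ Φ M, ‖∑ h ∈ Φ M, ξ (h - h')‖ < (Φ M).card * (ε ^ 2 / 8) := by
          intro h' hh'
          have := hall h' hh'
          rw [norm_smul, Real.norm_eq_abs, abs_of_nonneg (by positivity)] at this
          calc ‖∑ h ∈ Φ M, ξ (h - h')‖
              = (Φ M).card * ((((Φ M).card : ℝ)⁻¹) * ‖∑ h ∈ Φ M, ξ (h - h')‖) := by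
                field_simp
            _ < (Φ M).card * (ε ^ 2 / 8) := by
                exact (mul_lt_mul_iff_right₀ hcard).2 this
        calc ‖(((Φ M).card : ℝ)⁻¹) ^ 2 • ∑ h ∈ Φ M, ∑ h' ∈ Φ M, ξ (h - h')‖
            = (((Φ M).card : ℝ)⁻¹) ^ 2 * ‖∑ h' ∈ Φ M, ∑ h ∈ Φ M, ξ (h - h')‖ := by
              rw [Finset.sum_comm, norm_smul, Real.norm_eq_abs, abs_of_nonneg (by positivity)]
          _ ≤ (((Φ M).card : ℝ)⁻¹) ^ 2 * ∑ h' ∈ Φ M, ‖∑ h ∈ Φ M, ξ (h - h')‖ := by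
              gcongr
              exact norm_sum_le _ _
          _ < (((Φ M).card : ℝ)⁻¹) ^ 2 * ∑ _h' ∈ Φ M, ((Φ M).card * (ε ^ 2 / 8)) := by
              exact mul_lt_mul_of_pos_left (Finset.sum_lt_sum_of_nonempty hne hterm)
                (by positivity)
          _ = ε ^ 2 / 8 := by
              rw [Finset.sum_const, nsmul_eq_mul]
              field_simp
      linarith
    choose t ht hts using hsel
    have hΨ := hξ0 (fun M => (Φ M).image (· + (- t M)))
      (vdc_folner_translate hΦ (fun M => - t M))
    rw [NormedAddCommGroup.tendsto_nhds_zero] at hΨ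
    obtain ⟨M, hM⟩ := (hΨ (ε ^ 2 / 8) (by positivity)).exists
    have heq : (((((Φ M).image (· + (- t M))).card : ℝ))⁻¹)
        • ∑ g ∈ (Φ M).image (· + (- t M)), ξ g
        = (((Φ M).card : ℝ)⁻¹) • ∑ h ∈ Φ M, ξ (h - t M) := by
      rw [Finset.card_image_of_injective _ (add_left_injective _), vdc_sum_image_add]
      simp only [sub_eq_add_neg]
    rw [heq] at hM
    exact absurd hM (not_lt.2 (hts M))
  obtain ⟨F, hFne, hQF⟩ := hF
  set b : ℝ := ((F.card : ℝ)⁻¹) with hb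
  have hbpos : 0 < b := by
    rw [hb]
    have : (0 : ℝ) < F.card := by exact_mod_cast Finset.card_pos.2 hFne
    positivity
  -- the averaged shifted sums
  set V : ℕ → H := fun N => a N • ∑ g ∈ Φ N, (b • ∑ h ∈ F, u (g + h)) with hV
  set R : ℕ → ℝ := fun N => a N * ∑ g ∈ Φ N, ‖b • ∑ h ∈ F, u (g + h)‖ ^ 2 with hR
  -- pointwise expansion of the square
  have hg : ∀ g : Γ, ‖b • ∑ h ∈ F, u (g + h)‖ ^ 2
      = b ^ 2 * (∑ h ∈ F, ∑ h' ∈ F, (inner ℂ (u (g + h)) (u (g + h')) : ℂ)).re := by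
    intro g
    have h1 : (∑ h ∈ F, ∑ h' ∈ F, (inner ℂ (u (g + h)) (u (g + h')) : ℂ))
        = inner ℂ (∑ h ∈ F, u (g + h)) (∑ h' ∈ F, u (g + h')) := by
      rw [sum_inner]
      exact Finset.sum_congr rfl fun h _ => (inner_sum _ _ _).symm
    have h2 : ‖∑ h ∈ F, u (g + h)‖ ^ 2
        = ((inner ℂ (∑ h ∈ F, u (g + h)) (∑ h' ∈ F, u (g + h')) : ℂ)).re := by
      rw [← inner_self_eq_norm_sq (𝕜 := ℂ), RCLike.re_to_complex]
    rw [norm_smul, mul_pow, Real.norm_eq_abs, sq_abs, h1, h2]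
  -- R converges to b^2 * re of the double ξ-sum
  have hSrw : ∀ N, ((a N : ℝ) : ℂ) * ∑ g ∈ Φ N, ∑ h ∈ F, ∑ h' ∈ F,
      (inner ℂ (u (g + h)) (u (g + h')) : ℂ)
      = ∑ h ∈ F, ∑ h' ∈ F, (((a N : ℝ) : ℂ) * ∑ g ∈ Φ N,
        (inner ℂ (u (g + h)) (u (g + h')) : ℂ)) := by
    intro N
    rw [Finset.sum_comm]
    simp only [Finset.mul_sum]
    exact Finset.sum_congr rfl fun h _ => Finset.sum_comm
  have hStend : Tendsto (fun N => ((a N : ℝ) : ℂ) * ∑ g ∈ Φ N, ∑ h ∈ F, ∑ h' ∈ F,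
      (inner ℂ (u (g + h)) (u (g + h')) : ℂ)) atTop
      (nhds (∑ h ∈ F, ∑ h' ∈ F, ξ (h - h'))) := by
    simp only [hSrw]
    refine tendsto_finset_sum _ fun h _ => tendsto_finset_sum _ fun h' _ => ?_
    have := hinner h h'
    simp only [Complex.real_smul] at this
    exact this
  have hkey : ∀ N, R N = b ^ 2 * (((a N : ℝ) : ℂ) * ∑ g ∈ Φ N, ∑ h ∈ F, ∑ h' ∈ F,
      (inner ℂ (u (g + h)) (u (g + h')) : ℂ)).re := by
    intro N
    rw [Complex.re_ofReal_mul, Complex.re_sum]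
    simp only [hR, hg]
    rw [← Finset.mul_sum]
    ring
  have hRtend : Tendsto R atTop
      (nhds (b ^ 2 * (∑ h ∈ F, ∑ h' ∈ F, ξ (h - h')).re)) := by
    have h1 := ((Complex.continuous_re.tendsto _).comp hStend).const_mul (b ^ 2)
    exact Tendsto.congr (fun N => (hkey N).symm) h1
  -- the limit is small
  have hlim : b ^ 2 * (∑ h ∈ F, ∑ h' ∈ F, ξ (h - h')).re < ε ^ 2 / 8 := by
    have h1 : b ^ 2 * (∑ h ∈ F, ∑ h' ∈ F, ξ (h - h')).re
        = ((b ^ 2 : ℝ) • ∑ h ∈ F, ∑ h' ∈ F, ξ (h - h')).re := by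
      rw [Complex.real_smul, Complex.re_ofReal_mul]
    rw [h1]
    calc ((b ^ 2 : ℝ) • ∑ h ∈ F, ∑ h' ∈ F, ξ (h - h')).re
        ≤ ‖(b ^ 2 : ℝ) • ∑ h ∈ F, ∑ h' ∈ F, ξ (h - h')‖ := by
          exact Complex.re_le_norm _
      _ < ε ^ 2 / 8 := hQF
  -- eventually R N < (ε/2)^2
  have hRev : ∀ᶠ N in atTop, R N < (ε / 2) ^ 2 := by
    refine hRtend.eventually_lt_const ?_
    calc b ^ 2 * (∑ h ∈ F, ∑ h' ∈ F, ξ (h - h')).re < ε ^ 2 / 8 := hlim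
      _ < (ε / 2) ^ 2 := by nlinarith
  -- difference between T and V is eventually small
  have hdiff : ∀ N, ‖(a N • ∑ g ∈ Φ N, u g) - V N‖
      ≤ b * ∑ h ∈ F, (C * ((symmDiff ((Φ N).image (· + h)) (Φ N)).card / (Φ N).card : ℝ)) := by
    intro N
    have hcard : (0 : ℝ) < (Φ N).card := by exact_mod_cast Finset.card_pos.2 (hΦ.1 N)
    have hTb : a N • ∑ g ∈ Φ N, u g = b • ∑ h ∈ F, (a N • ∑ g ∈ Φ N, u g) := by
      rw [Finset.sum_const, ← Nat.cast_smul_eq_nsmul ℝ, smul_smul]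
      have hb1 : b * (F.card : ℝ) = 1 := by
        rw [hb]
        have : (0 : ℝ) < F.card := by exact_mod_cast Finset.card_pos.2 hFne
        field_simp
      rw [hb1, one_smul]
    have hVb : V N = b • ∑ h ∈ F, (a N • ∑ g ∈ (Φ N).image (· + h), u g) := by
      simp only [hV, vdc_sum_image_add]
      rw [← Finset.smul_sum, smul_comm (a N) b, Finset.sum_comm, Finset.smul_sum]
    rw [hTb, hVb, ← smul_sub, ← Finset.sum_sub_distrib]
    rw [norm_smul, Real.norm_eq_abs, abs_of_nonneg hbpos.le]
    refine mul_le_mul_of_nonneg_left ?_ hbpos.le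
    calc ‖∑ h ∈ F, ((a N • ∑ g ∈ Φ N, u g) - a N • ∑ g ∈ (Φ N).image (· + h), u g)‖
        ≤ ∑ h ∈ F, ‖(a N • ∑ g ∈ Φ N, u g) - a N • ∑ g ∈ (Φ N).image (· + h), u g‖ :=
          norm_sum_le _ _
      _ ≤ ∑ h ∈ F, (C * ((symmDiff ((Φ N).image (· + h)) (Φ N)).card / (Φ N).card : ℝ)) := by
          refine Finset.sum_le_sum fun h _ => ?_
          rw [← smul_sub, norm_smul, Real.norm_eq_abs, abs_of_nonneg (by positivity)]
          have := vdc_sum_sub_sum_norm (Φ N) ((Φ N).image (· + h)) u C hC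
          rw [symmDiff_comm]
          calc a N * ‖(∑ g ∈ Φ N, u g) - ∑ g ∈ (Φ N).image (· + h), u g‖
              ≤ a N * (C * ((symmDiff (Φ N) ((Φ N).image (· + h))).card : ℝ)) := by
                exact mul_le_mul_of_nonneg_left this (by positivity)
            _ = C * (((symmDiff (Φ N) ((Φ N).image (· + h))).card : ℝ) / (Φ N).card) := by
                rw [ha]; field_simp
  have hDtend : Tendsto (fun N => b * ∑ h ∈ F,
      (C * ((symmDiff ((Φ N).image (· + h)) (Φ N)).card / (Φ N).card : ℝ))) atTop (nhds 0) := by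
    have : Tendsto (fun N => ∑ h ∈ F,
        (C * ((symmDiff ((Φ N).image (· + h)) (Φ N)).card / (Φ N).card : ℝ))) atTop
        (nhds (∑ h ∈ F, (0 : ℝ))) := by
      refine tendsto_finset_sum _ fun h _ => ?_
      simpa using (hΦ.2 h).const_mul C
    simpa using this.const_mul b
  have hDev : ∀ᶠ N in atTop, (b * ∑ h ∈ F,
      (C * ((symmDiff ((Φ N).image (· + h)) (Φ N)).card / (Φ N).card : ℝ))) < ε / 2 :=
    hDtend.eventually_lt_const (by positivity)
  -- conclude
  filter_upwards [hRev, hDev] with N hR1 hD1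
  have hVR : ‖V N‖ ^ 2 ≤ R N := vdc_avg_norm_sq (Φ N) _
  have hVsmall : ‖V N‖ < ε / 2 := by
    refine lt_of_pow_lt_pow_left₀ 2 (by positivity) ?_
    calc ‖V N‖ ^ 2 ≤ R N := hVR
      _ < (ε / 2) ^ 2 := hR1
  have hTV : ‖(a N • ∑ g ∈ Φ N, u g) - V N‖ < ε / 2 := lt_of_le_of_lt (hdiff N) hD1
  calc ‖a N • ∑ g ∈ Φ N, u g‖
      = ‖((a N • ∑ g ∈ Φ N, u g) - V N) + V N‖ := by rw [sub_add_cancel]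
    _ ≤ ‖(a N • ∑ g ∈ Φ N, u g) - V N‖ + ‖V N‖ := norm_add_le _ _
    _ < ε / 2 + ε / 2 := add_lt_add hTV hVsmall
    _ = ε := by ring
end

section
/- Let Γ be a countable discrete abelian group, Φ a countable family of endomorphisms of Γ, Ψ a countable family of injective endomorphisms of Γ, and Λ₀ ⊆ Γ̂ a countable subgroup. Then there exists a countable subgroup Λ ⊆ Γ̂ containing Λ₀ that is Φ-complete (for every λ ∈ Λ and φ ∈ Φ, λ∘φ ∈ Λ) and Ψ-divisible (for every λ ∈ Λ and ψ ∈ Ψ, there exists λ' ∈ Λ with λ'∘ψ = λ). -/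
open Filter

noncomputable instance : DivisibleBy (Additive Circle) ℤ :=
  Function.Surjective.divisibleBy (⇑Circle.expHom)
    (fun z => ⟨Complex.arg ↑z.toMul, congrArg Additive.ofMul (Circle.exp_arg z.toMul)⟩)
    (fun a n => map_zsmul Circle.expHom n a)

open CategoryTheory in
private lemma exists_addChar_comp {Γ : Type u} [AddCommGroup Γ] (ψ : Γ →+ Γ)
    (hψ : Function.Injective ψ) (lam : AddChar Γ Circle) :
    ∃ lam' : AddChar Γ Circle, ∀ g : Γ, lam' (ψ g) = lam g := by
  let D := AddCommGrpCat.of (ULift.{u} (Additive Circle))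
  haveI : Injective D := AddCommGrpCat.injective_of_divisible _
  let f : AddCommGrpCat.of Γ ⟶ AddCommGrpCat.of Γ := AddCommGrpCat.ofHom ψ
  haveI : Mono f := (AddCommGrpCat.mono_iff_injective f).mpr hψ
  let g : AddCommGrpCat.of Γ ⟶ D :=
    AddCommGrpCat.ofHom ((AddEquiv.ulift.symm.toAddMonoidHom).comp
      (AddChar.toAddMonoidHomEquiv lam))
  let h := Injective.factorThru g f
  refine ⟨AddChar.toAddMonoidHomEquiv.symm (AddEquiv.ulift.toAddMonoidHom.comp h.hom),
    fun x => ?_⟩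
  have hc := Injective.comp_factorThru g f
  have hx := ConcreteCategory.congr_hom hc x
  simp only [CategoryTheory.comp_apply] at hx
  show ((h.hom (ψ x)).down).toMul = lam x
  rw [show h.hom (ψ x) = g.hom x from hx]
  rfl

private noncomputable def precompHom {Γ : Type*} [AddCommGroup Γ] (f : Γ →+ Γ) :
    AddChar Γ Circle →* AddChar Γ Circle where
  toFun l := l.compAddMonoidHom f
  map_one' := by ext g; simp
  map_mul' a b := by ext g; simp

private lemma countable_closure_aux {G : Type*} [Group G] {S : Set G} (hS : S.Countable) :
    ((Subgroup.closure S : Subgroup G) : Set G).Countable := by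
  have hinv : (S⁻¹ : Set G).Countable := hS.preimage inv_injective
  have hT : (S ∪ S⁻¹).Countable := hS.union hinv
  haveI := hT.to_subtype
  have hlists : {l : List G | ∀ y ∈ l, y ∈ S ∪ S⁻¹}.Countable := by
    refine (Set.countable_range
      (fun l : List (S ∪ S⁻¹ : Set G) => l.map Subtype.val)).mono ?_
    intro l hl
    induction l with
    | nil => exact ⟨[], rfl⟩
    | cons a l ih =>
      obtain ⟨L, hL⟩ := ih (fun y hy => hl y (List.mem_cons_of_mem a hy))
      exact ⟨⟨a, hl a (List.mem_cons_self)⟩ :: L, by simp only [List.map_cons, hL]⟩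
  have key : ((Subgroup.closure S : Subgroup G) : Set G) ⊆
      List.prod '' {l : List G | ∀ y ∈ l, y ∈ S ∪ S⁻¹} := by
    intro x hx
    have hx' : x ∈ (Subgroup.closure S).toSubmonoid := hx
    rw [Subgroup.closure_toSubmonoid] at hx'
    obtain ⟨l, h1, h2⟩ := Submonoid.exists_list_of_mem_closure hx'
    exact ⟨l, h1, h2⟩
  exact (hlists.image _).mono key

/-- Any countable subgroup of characters `Λ₀ ⊆ Γ̂` is contained in a countable subgroup `Λ`
which is `Φ`-complete (closed under precomposition with endomorphisms in `Φ`) and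
`Ψ`-divisible (every element has, for each injective `ψ ∈ Ψ`, a preimage in `Λ` under
precomposition with `ψ`). -/
theorem exists_complete_divisible_countable_subgroup
    {Γ : Type*} [AddCommGroup Γ] [Countable Γ]
    (Φ Ψ : Set (Γ →+ Γ)) (hΦ : Φ.Countable) (hΨ : Ψ.Countable)
    (hΨinj : ∀ ψ ∈ Ψ, Function.Injective ψ)
    (Λ₀ : Subgroup (AddChar Γ Circle)) (hΛ₀ : (Λ₀ : Set (AddChar Γ Circle)).Countable) :
    ∃ Λ : Subgroup (AddChar Γ Circle),
      (Λ : Set (AddChar Γ Circle)).Countable ∧ Λ₀ ≤ Λ ∧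
      (∀ lam ∈ Λ, ∀ φ ∈ Φ, ∃ lam' ∈ Λ, ∀ g : Γ, lam' g = lam (φ g)) ∧
      (∀ lam ∈ Λ, ∀ ψ ∈ Ψ, ∃ lam' ∈ Λ, ∀ g : Γ, lam' (ψ g) = lam g) := by
  classical
  choose d hd using fun (p : {ψ // ψ ∈ Ψ}) (lam : AddChar Γ Circle) =>
    exists_addChar_comp p.1 (hΨinj p.1 p.2) lam
  let α := {φ // φ ∈ Φ} ⊕ {ψ // ψ ∈ Ψ}
  let op : α → AddChar Γ Circle → AddChar Γ Circle :=
    fun a lam => match a with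
      | .inl φ => lam.compAddMonoidHom φ.1
      | .inr ψ => d ψ lam
  haveI := hΦ.to_subtype
  haveI := hΨ.to_subtype
  haveI := hΛ₀.to_subtype
  let S : Set (AddChar Γ Circle) :=
    Set.range (fun p : List α × Λ₀ => p.1.foldr op p.2)
  have hS : S.Countable := Set.countable_range _
  have hΛ₀S : (Λ₀ : Set (AddChar Γ Circle)) ⊆ S := fun l hl => ⟨([], ⟨l, hl⟩), rfl⟩
  have hopS : ∀ a : α, ∀ s ∈ S, op a s ∈ S := by
    rintro a s ⟨⟨w, l⟩, rfl⟩
    exact ⟨(a :: w, l), rfl⟩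
  refine ⟨Subgroup.closure S, countable_closure_aux hS,
    fun x hx => Subgroup.subset_closure (hΛ₀S hx), ?_, ?_⟩
  · intro lam hlam φ hφ
    refine ⟨(precompHom φ) lam, ?_, fun g => rfl⟩
    have hmap : (Subgroup.closure S).map (precompHom φ) ≤ Subgroup.closure S := by
      rw [MonoidHom.map_closure]
      refine Subgroup.closure_mono ?_
      rintro _ ⟨s, hs, rfl⟩
      exact hopS (.inl ⟨φ, hφ⟩) s hs
    exact hmap ⟨lam, hlam, rfl⟩
  · intro lam hlam ψ hψ
    have hsub : Subgroup.closure S ≤ (Subgroup.closure S).map (precompHom ψ) := by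
      rw [MonoidHom.map_closure]
      refine Subgroup.closure_mono ?_
      intro s hs
      refine ⟨d ⟨ψ, hψ⟩ s, hopS (.inr ⟨ψ, hψ⟩) s hs, ?_⟩
      ext g
      exact congrArg Subtype.val (hd ⟨ψ, hψ⟩ s g)
    obtain ⟨lam', hlam', heq⟩ := hsub hlam
    exact ⟨lam', hlam', fun g => DFunLike.congr_fun heq g⟩
end
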